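/- (Double centralizer theorem over arbitrary commutative rings, type A instance.) Let R be a commutative ring and let n ≥ 3. Then the centralizer in SL_n(R) of the set Γ = {1 + E_{kl} : k ≠ l, k ≠ 2, l ≠ 1} (indices 1-based) is exactly the set {ω • (1 + r • E_{12}) : ω, r ∈ R, ω^n = 1}. That is, g ∈ SL_n(R) commutes with every element of Γ if and only if g is a central scalar matrix ω·1 (with ω^n = 1) times an elementary transvection t_{12}(r). -/

import Mathlib

/-!
A matrix commuting with `E_ab` (`a ≠ b`) has `M_aa = M_bb` and vanishes off the diagonal in
column `a` and in row `b`. The admissible pairs (`a ≠ 2`, `b ≠ 1`) kill every off-diagonal entry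
except `g_12` and, passing through a third index, identify all diagonal entries, so
`g = ω • 1 + s • E_12`. Being upper triangular, `g` has determinant `ω ^ n = 1`, so `ω` is a unit
and `g = ω • t_12(ω ^ (n - 1) * s)`.
-/

open Matrix

theorem commute_one_add_left_iff {A : Type*} [Ring A] {a b : A} :
    Commute (1 + a) b ↔ Commute a b := by
  refine ⟨fun h => ?_, fun h => (Commute.one_left b).add_left h⟩
  simpa only [Commute, SemiconjBy, add_mul, mul_add, one_mul, mul_one, add_right_inj] using h

namespace Matrix

variable {n α : Type*} [DecidableEq n]

theorem single_apply_diag_of_ne [Zero α] {i j : n} (hij : i ≠ j) (c : α) (a : n) :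
    single i j c a a = 0 :=
  congrFun (diag_single_of_ne i j c hij) a

variable [Fintype n]

section Semiring

variable [Semiring α] {i j : n} {M : Matrix n n α}

theorem apply_eq_zero_of_forall_commute_single (hij : i ≠ j)
    (hM : ∀ a b, a ≠ b → a ≠ j → b ≠ i → Commute (single a b 1) M)
    {a b : n} (hab : a ≠ b) (h : a ≠ i ∨ b ≠ j) : M a b = 0 := by
  rcases h with hai | hbj
  · exact row_eq_zero_of_commute_single (hM i a (Ne.symm hai) hij hai) (Ne.symm hab)
  · exact col_eq_zero_of_commute_single (hM b j hbj hbj (Ne.symm hij)) hab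

theorem diag_eq_of_forall_commute_single {k : n} (hij : i ≠ j) (hik : i ≠ k) (hjk : j ≠ k)
    (hM : ∀ a b, a ≠ b → a ≠ j → b ≠ i → Commute (single a b 1) M) (a : n) :
    M a a = M i i := by
  obtain rfl | hai := eq_or_ne a i
  · rfl
  obtain rfl | - := eq_or_ne a j
  · calc M a a = M k k := (diag_eq_of_commute_single (hM k a hjk.symm hjk.symm hij.symm)).symm
      _ = M i i := (diag_eq_of_commute_single (hM i k hik hij hik.symm)).symm
  · exact (diag_eq_of_commute_single (hM i a hai.symm hij hai)).symm

theorem eq_scalar_add_single_of_forall_commute_single {k : n} (hij : i ≠ j) (hik : i ≠ k)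
    (hjk : j ≠ k) (hM : ∀ a b, a ≠ b → a ≠ j → b ≠ i → Commute (single a b 1) M) :
    M = scalar n (M i i) + single i j (M i j) := by
  ext a b
  by_cases hab' : i = a ∧ j = b
  · obtain ⟨rfl, rfl⟩ := hab'
    simp [hij]
  rw [Matrix.add_apply, single_apply_of_ne _ _ _ _ _ hab', add_zero]
  obtain rfl | hab := eq_or_ne a b
  · simp [diag_eq_of_forall_commute_single hij hik hjk hM]
  · rw [apply_eq_zero_of_forall_commute_single hij hM hab
      ((not_and_or.1 hab').imp Ne.symm Ne.symm)]
    simp [hab]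

end Semiring

section CommRing

variable [CommRing α] {i j : n}

theorem commute_single_scalar_add_single {a b : n} (haj : a ≠ j) (hbi : b ≠ i) (ω r : α) :
    Commute (single a b 1) (scalar n ω + single i j r) := by
  refine (scalar_commute ω (Commute.all ω) _).symm.add_right ?_
  rw [Commute, SemiconjBy, single_mul_single_of_ne _ _ _ _ hbi,
    single_mul_single_of_ne _ _ _ _ haj.symm]

theorem smul_one_add_smul_single (ω r : α) :
    ω • (1 + r • single i j 1) = scalar n ω + single i j (ω * r) := by
  rw [smul_add, smul_smul, smul_single, smul_eq_mul, mul_one, smul_one_eq_diagonal, scalar_apply]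

theorem det_scalar_add_single [LinearOrder n] (hij : i < j) (ω r : α) :
    det (scalar n ω + single i j r) = ω ^ Fintype.card n := by
  have htri : (scalar n ω + single i j r).IsUpperTriangular := by
    intro a b hba
    have hab' : ¬(i = a ∧ j = b) := by
      rintro ⟨rfl, rfl⟩
      exact lt_asymm hij hba
    simpa [single_apply_of_ne _ _ _ _ _ hab'] using diagonal_apply_ne _ hba.ne'
  rw [det_of_isUpperTriangular htri]
  simp [single_apply_diag_of_ne hij.ne]

end CommRing

end Matrix

/-- Double centralizer theorem over an arbitrary commutative ring, type A instance:
`g ∈ SL_n(R)` (`n ≥ 3`) commutes with all elementary transvections `t_{kl}(1) = 1 + E_{kl}`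
with `k ≠ l`, `k ≠ 2`, `l ≠ 1` (1-based indices) if and only if `g = ω • t_{12}(r)` for
some scalar `ω` with `ω^n = 1` and some `r ∈ R`. -/
theorem double_centralizer_comm_ring_typeA {R : Type*} [CommRing R] {n : ℕ}
    (hn : 3 ≤ n) (g : Matrix.SpecialLinearGroup (Fin n) R) :
    (∀ k l : Fin n, k ≠ l → k ≠ ⟨1, by omega⟩ → l ≠ ⟨0, by omega⟩ →
      (g : Matrix (Fin n) (Fin n) R) * (1 + Matrix.single k l 1) =
        (1 + Matrix.single k l 1) * (g : Matrix (Fin n) (Fin n) R)) ↔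
    (∃ ω r : R, ω ^ n = 1 ∧
      (g : Matrix (Fin n) (Fin n) R) =
        ω • (1 + r • Matrix.single (⟨0, by omega⟩ : Fin n) (⟨1, by omega⟩ : Fin n) 1)) := by
  have h01 : (⟨0, by omega⟩ : Fin n) < ⟨1, by omega⟩ := Fin.mk_lt_mk.2 zero_lt_one
  have h02 : (⟨0, by omega⟩ : Fin n) ≠ ⟨2, by omega⟩ := by simp
  have h12 : (⟨1, by omega⟩ : Fin n) ≠ ⟨2, by omega⟩ := by simp
  have hΓ (k l : Fin n) : (g : Matrix (Fin n) (Fin n) R) * (1 + single k l 1) =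
      (1 + single k l 1) * (g : Matrix (Fin n) (Fin n) R) ↔
        Commute (single k l 1) (g : Matrix (Fin n) (Fin n) R) :=
    (commute_iff_eq _ _).symm.trans (Commute.symm_iff.trans commute_one_add_left_iff)
  simp only [hΓ]
  constructor
  · intro h
    have hg := eq_scalar_add_single_of_forall_commute_single h01.ne h02 h12 h
    set ω := (g : Matrix (Fin n) (Fin n) R) ⟨0, by omega⟩ ⟨0, by omega⟩
    set s := (g : Matrix (Fin n) (Fin n) R) ⟨0, by omega⟩ ⟨1, by omega⟩
    have hω : ω ^ n = 1 := by
      rw [← g.det_coe, hg, det_scalar_add_single h01, Fintype.card_fin]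
    refine ⟨ω, ω ^ (n - 1) * s, hω, ?_⟩
    rwa [smul_one_add_smul_single, ← mul_assoc, ← pow_succ', Nat.sub_add_cancel (by omega), hω,
      one_mul]
  · rintro ⟨ω, r, -, hg⟩ k l - hk hl
    rw [hg, smul_one_add_smul_single]
    exact commute_single_scalar_add_single hk hl _ _
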